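/- arXiv:2506.12579 — 8 statements merged into one kernel-verified Lean document; each statement's English description precedes it below -/
import Mathlib

section
/- Let A ∈ S^m be a symmetric positive semidefinite matrix. Then the orthogonal complement (with respect to the trace inner product on S^m) of the subspace {N ∈ S^m : EᵀNE = 0}, where the columns of E form a basis of ker A, equals {Y ∈ S^m : AY = 0}. -/
open Matrix

lemma trace_transpose_mul_self_eq_zero' {m n : ℕ} (M : Matrix (Fin m) (Fin n) ℝ)
    (h : (Mᵀ * M).trace = 0) : M = 0 := by
  have h' : ∑ j, ∑ i, M i j * M i j = 0 := by
    simpa [Matrix.trace, Matrix.diag, Matrix.mul_apply] using h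
  ext i j
  have hnn : ∀ j ∈ Finset.univ, (0:ℝ) ≤ ∑ i, M i j * M i j := fun j _ =>
    Finset.sum_nonneg fun i _ => mul_self_nonneg _
  have hj := (Finset.sum_eq_zero_iff_of_nonneg hnn).mp h' j (Finset.mem_univ j)
  have hij := (Finset.sum_eq_zero_iff_of_nonneg
    (fun i _ => mul_self_nonneg (M i j))).mp hj i (Finset.mem_univ i)
  simpa [mul_self_eq_zero] using hij

/-- For `A ⪰ 0`, the orthogonal complement (w.r.t. the trace inner
product on symmetric matrices) of `{N ∈ S^m : EᵀNE = 0}`, where the columns of `E`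
form a basis of `ker A`, equals `{Y ∈ S^m : AY = 0}`. -/
theorem stmt1 (m k : ℕ) (A : Matrix (Fin m) (Fin m) ℝ) (hA : A.PosSemidef)
    (E : Matrix (Fin m) (Fin k) ℝ)
    (hE1 : LinearIndependent ℝ (fun j => Eᵀ j))
    (hE2 : LinearMap.range E.mulVecLin = LinearMap.ker A.mulVecLin) :
    {Y : Matrix (Fin m) (Fin m) ℝ | Y.IsSymm ∧
        ∀ N : Matrix (Fin m) (Fin m) ℝ, N.IsSymm → Eᵀ * N * E = 0 → (Y * N).trace = 0}
      = {Y : Matrix (Fin m) (Fin m) ℝ | Y.IsSymm ∧ A * Y = 0} := by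
  have hAsymm : Aᵀ = A := hA.1
  -- A * E = 0
  have hAE : A * E = 0 := by
    ext i j
    have hmem : E.mulVecLin (Pi.single j 1) ∈ LinearMap.ker A.mulVecLin := by
      rw [← hE2]; exact LinearMap.mem_range_self _ _
    have h0 : (A * E) *ᵥ Pi.single j 1 = 0 := by
      rw [← Matrix.mulVec_mulVec]; exact hmem
    have := congr_fun h0 i
    simpa [Matrix.mulVec_single] using this
  have hEA : Eᵀ * A = 0 := by
    have := congrArg Matrix.transpose hAE
    simpa [Matrix.transpose_mul, hAsymm] using this
  ext Y
  simp only [Set.mem_setOf_eq]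
  constructor
  · rintro ⟨hs, h⟩
    refine ⟨hs, ?_⟩
    set N := A * A * Y + Y * (A * A) with hN
    have hNs : N.IsSymm := by
      rw [Matrix.IsSymm, hN]
      simp only [Matrix.transpose_add, Matrix.transpose_mul, hAsymm, hs.eq]
      rw [add_comm, Matrix.mul_assoc]
    have hEN : Eᵀ * N * E = 0 := by
      have h1 : Eᵀ * (A * A * Y) * E = Eᵀ * A * (A * (Y * E)) := by
        simp only [Matrix.mul_assoc]
      have h2 : Eᵀ * (Y * (A * A)) * E = Eᵀ * (Y * (A * (A * E))) := by
        simp only [Matrix.mul_assoc]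
      rw [hN, Matrix.mul_add, Matrix.add_mul, h1, h2, hEA, hAE, Matrix.zero_mul,
        Matrix.mul_zero, Matrix.mul_zero, Matrix.mul_zero, add_zero]
    have htr := h N hNs hEN
    have key : ((A*Y)ᵀ * (A*Y)).trace = 0 := by
      have e1 : (A*Y)ᵀ * (A*Y) = Y * (A * (A * Y)) := by
        rw [Matrix.transpose_mul, hAsymm, hs.eq]
        noncomm_ring
      have e2 : (Y * N).trace = 2 * ((A*Y)ᵀ * (A*Y)).trace := by
        rw [hN, Matrix.mul_add, Matrix.trace_add, e1]
        have c1 : (Y * (A * A * Y)).trace = (Y * (A * (A * Y))).trace := by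
          rw [Matrix.mul_assoc]
        have c2 : (Y * (Y * (A * A))).trace = (Y * (A * (A * Y))).trace := by
          rw [← Matrix.mul_assoc Y Y, Matrix.trace_mul_comm (Y * Y) (A * A),
            Matrix.trace_mul_comm Y (A * (A * Y)), ← Matrix.mul_assoc A A Y,
            Matrix.mul_assoc (A * A) Y Y]
        rw [c1, c2]; ring
      rw [htr] at e2
      linarith
    exact trace_transpose_mul_self_eq_zero' _ key
  · rintro ⟨hs, hAY⟩
    refine ⟨hs, fun N hNs hEN => ?_⟩
    set G := Eᵀ * E with hG
    have hEinj : Function.Injective E.mulVec := Matrix.mulVec_injective_iff.mpr hE1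
    have hGinj : Function.Injective G.mulVec := by
      intro x y hxy
      apply hEinj
      have hker : ∀ v, G *ᵥ v = 0 → E *ᵥ v = 0 := by
        intro v hv
        have hd : (E *ᵥ v) ⬝ᵥ (E *ᵥ v) = 0 := by
          have h0 : v ⬝ᵥ (G *ᵥ v) = 0 := by rw [hv, dotProduct_zero]
          rwa [hG, ← Matrix.mulVec_mulVec, Matrix.dotProduct_mulVec,
            Matrix.vecMul_transpose] at h0
        rwa [dotProduct_self_eq_zero] at hd
      have hd : G *ᵥ (x - y) = 0 := by
        rw [Matrix.mulVec_sub, hxy, sub_self]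
      have := hker _ hd
      rw [Matrix.mulVec_sub] at this
      exact sub_eq_zero.mp this
    have hGunit : IsUnit G := Matrix.mulVec_injective_iff_isUnit.mp hGinj
    have hGdet : IsUnit G.det := (Matrix.isUnit_iff_isUnit_det G).mp hGunit
    have hGinv : G⁻¹ * G = 1 := Matrix.nonsing_inv_mul G hGdet
    set P := E * G⁻¹ * Eᵀ with hP
    have hPY : P * Y = Y := by
      ext i j
      have hcol : (fun l => Y l j) ∈ LinearMap.range E.mulVecLin := by
        rw [hE2]
        show A *ᵥ (fun l => Y l j) = 0
        ext i'
        have := congr_fun (congr_fun hAY i') j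
        simpa [Matrix.mul_apply, Matrix.mulVec, dotProduct] using this
      obtain ⟨v, hv⟩ := hcol
      have hv' : E *ᵥ v = fun l => Y l j := hv
      have hPv : (P *ᵥ (fun l => Y l j)) = fun l => Y l j := by
        rw [← hv', hP, ← Matrix.mulVec_mulVec, ← Matrix.mulVec_mulVec,
          Matrix.mulVec_mulVec v Eᵀ E, show Eᵀ * E = G from rfl,
          Matrix.mulVec_mulVec v G⁻¹ G, hGinv, Matrix.one_mulVec]
      have := congr_fun hPv i
      simpa [Matrix.mul_apply, Matrix.mulVec, dotProduct] using this
    have hPsymm : Pᵀ = P := by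
      rw [hP, Matrix.transpose_mul, Matrix.transpose_mul, Matrix.transpose_transpose,
        Matrix.transpose_nonsing_inv]
      have hGs : Gᵀ = G := by rw [hG, Matrix.transpose_mul, Matrix.transpose_transpose]
      rw [hGs, Matrix.mul_assoc]
    have hYP : Y * P = Y := by
      have := congrArg Matrix.transpose hPY
      rwa [Matrix.transpose_mul, hPsymm, hs.eq] at this
    have hYPP : Y = P * Y * P := by
      rw [Matrix.mul_assoc, hYP, hPY]
    calc (Y * N).trace = (P * Y * P * N).trace := by rw [← hYPP]
      _ = ((G⁻¹ * Eᵀ * Y * E * G⁻¹) * (Eᵀ * N * E)).trace := by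
          rw [hP, show E * G⁻¹ * Eᵀ * Y * (E * G⁻¹ * Eᵀ) * N
              = E * ((G⁻¹ * Eᵀ * Y * E * G⁻¹) * (Eᵀ * N)) by simp only [Matrix.mul_assoc],
            Matrix.trace_mul_comm]
          simp only [Matrix.mul_assoc]
      _ = 0 := by rw [hEN, Matrix.mul_zero, Matrix.trace_zero]
end

section
/- With P(x) as above (stacking P₁ and P₂), for every Λ ∈ S^m and every x: ∇G(x)*[Λ] = 0 and G(x)Λ = 0 simultaneously hold if and only if P(x)·uvec(Λ) = 0. Consequently, G(x) is nondegenerate (i.e., ker ∇G(x)* ∩ {Y ∈ S_ℂ^m : G(x)Y = 0} = {0} for all x ∈ ℂⁿ) if and only if P(x) has full column rank Δ(m) for every x ∈ ℂⁿ. -/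
open Matrix

namespace Matrix

variable {ι R : Type*} [LinearOrder ι]

/-- The entries of `Λ` on and above the diagonal; for symmetric `Λ` this is the paper's
`uvec(Λ)`, indexed by pairs `i ≤ j` rather than by a numbering of them. -/
def uvec (Λ : Matrix ι ι R) : {p : ι × ι // p.1 ≤ p.2} → R :=
  fun p => Λ p.val.1 p.val.2

def ofUvec (w : {p : ι × ι // p.1 ≤ p.2} → R) : Matrix ι ι R :=
  fun i j => if h : i ≤ j then w ⟨(i, j), h⟩ else w ⟨(j, i), le_of_not_ge h⟩

theorem isSymm_ofUvec (w : {p : ι × ι // p.1 ≤ p.2} → R) : (ofUvec w).IsSymm := by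
  ext i j
  rcases lt_trichotomy i j with hij | rfl | hij
  · simp [ofUvec, hij.le, not_le_of_gt hij]
  · rfl
  · simp [ofUvec, hij.le, not_le_of_gt hij]

@[simp]
theorem uvec_ofUvec (w : {p : ι × ι // p.1 ≤ p.2} → R) : uvec (ofUvec w) = w := by
  funext p
  simp [uvec, ofUvec, p.2]

theorem IsSymm.uvec_eq_zero_iff [Zero R] {Λ : Matrix ι ι R} (hΛ : Λ.IsSymm) :
    uvec Λ = 0 ↔ Λ = 0 := by
  refine ⟨fun h => ?_, fun h => h ▸ rfl⟩
  ext i j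
  rcases le_total i j with hij | hji
  · exact congrFun h ⟨(i, j), hij⟩
  · rw [← hΛ.apply i j]
    exact congrFun h ⟨(j, i), hji⟩

/-- Every coordinate vector is the `uvec` of a symmetric matrix, namely of its `ofUvec`. -/
theorem injective_mulVec_iff_forall_isSymm {κ : Type*} [Fintype ι] [Ring R]
    (A : Matrix κ {p : ι × ι // p.1 ≤ p.2} R) :
    Function.Injective A.mulVec ↔ ∀ Λ : Matrix ι ι R, Λ.IsSymm → A *ᵥ uvec Λ = 0 → Λ = 0 := by
  refine ⟨fun hA Λ hΛ h => hΛ.uvec_eq_zero_iff.1 (hA (h.trans (mulVec_zero A).symm)),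
    fun hA u v huv => sub_eq_zero.1 ?_⟩
  have hzero := hA (ofUvec (u - v)) (isSymm_ofUvec _) (by rw [uvec_ofUvec, mulVec_sub, huv, sub_self])
  rw [← uvec_ofUvec (u - v), hzero]
  rfl

end Matrix

theorem Sum.elim_eq_zero_iff {α β R : Type*} [Zero R] {f : α → R} {g : β → R} :
    Sum.elim f g = 0 ↔ f = 0 ∧ g = 0 := by
  rw [← Sum.elim_zero_zero, Sum.elim_eq_iff]

/-- `P(x)·uvec(Λ) = 0` iff `∇G(x)*[Λ] = 0` and `G(x)Λ = 0`;
consequently, `G` is nondegenerate (over ℂ) iff `P(x)` has full column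
rank for every `x ∈ ℂⁿ`. -/
theorem stmt4 (n m : ℕ)
    (G : (Fin n → ℂ) → Matrix (Fin m) (Fin m) ℂ)
    (Gd : (Fin n → ℂ) → Fin n → Matrix (Fin m) (Fin m) ℂ)
    (P : (Fin n → ℂ) → Matrix ((Fin n) ⊕ (Fin m × Fin m)) {p : Fin m × Fin m // p.1 ≤ p.2} ℂ)
    (hP : ∀ x (Λ : Matrix (Fin m) (Fin m) ℂ), Λ.IsSymm →
      (P x).mulVec (fun p => Λ p.val.1 p.val.2) =
        Sum.elim (fun i => ((Gd x i) * Λ).trace) (fun q => (G x * Λ) q.1 q.2)) :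
    (∀ x (Λ : Matrix (Fin m) (Fin m) ℂ), Λ.IsSymm →
        ((P x).mulVec (fun p => Λ p.val.1 p.val.2) = 0 ↔
          ((∀ i, ((Gd x i) * Λ).trace = 0) ∧ G x * Λ = 0)))
    ∧
    ((∀ x (Y : Matrix (Fin m) (Fin m) ℂ), Y.IsSymm →
        (∀ i, ((Gd x i) * Y).trace = 0) → G x * Y = 0 → Y = 0)
      ↔ (∀ x, Function.Injective (P x).mulVec)) := by
  have hker : ∀ x (Λ : Matrix (Fin m) (Fin m) ℂ), Λ.IsSymm →
      ((P x) *ᵥ uvec Λ = 0 ↔ ((∀ i, ((Gd x i) * Λ).trace = 0) ∧ G x * Λ = 0)) := by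
    intro x Λ hΛ
    unfold uvec
    rw [hP x Λ hΛ, Sum.elim_eq_zero_iff, funext_iff, funext_iff, ← Matrix.ext_iff]
    simp only [Pi.zero_apply, Prod.forall, Matrix.zero_apply]
  refine ⟨hker, forall_congr' fun x => ?_⟩
  rw [injective_mulVec_iff_forall_isSymm]
  exact forall₂_congr fun Λ hΛ => by rw [hker x Λ hΛ, and_imp]
end

section
/- Let G(x) be the 2×2 matrix polynomial with entries G₁₁ = x₁²−2, G₁₂ = G₂₁ = (1/2)x₁x₂, G₂₂ = x₂²−2, and let f be any polynomial in (x₁,x₂). Define Θ(x) to be the symmetric 2×2 matrix polynomial with Θ₁₁ = (1/4)x₁ f_{x₁}, Θ₂₂ = (1/4)x₂ f_{x₂}, and Θ₁₂ = ((1/4)x₂ − (3/32)x₁²x₂) f_{x₁} + ((1/4)x₁ − (3/32)x₁x₂²) f_{x₂}. Then for every (x, Λ) ∈ ℝ² × S² satisfying ∇f(x) = ∇G(x)*[Λ] and G(x)Λ = 0, one has Λ = Θ(x). -/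
open Matrix

/-- For `G(x) = [[x₁²−2, x₁x₂/2],[x₁x₂/2, x₂²−2]]`, the stated `Θ(x)`
recovers the Lagrange multiplier matrix from any KKT pair. -/
theorem stmt7 (f : MvPolynomial (Fin 2) ℝ) (x1 x2 : ℝ)
    (Λ : Matrix (Fin 2) (Fin 2) ℝ) (hΛ : Λ.IsSymm)
    (fx1 fx2 : ℝ)
    (hfx1 : fx1 = MvPolynomial.eval ![x1, x2] (MvPolynomial.pderiv (0 : Fin 2) f))
    (hfx2 : fx2 = MvPolynomial.eval ![x1, x2] (MvPolynomial.pderiv (1 : Fin 2) f))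
    -- KKT: ∇f(x) = ∇G(x)*[Λ], with ∂G/∂x₁ = [[2x₁, x₂/2],[x₂/2, 0]],
    -- ∂G/∂x₂ = [[0, x₁/2],[x₁/2, 2x₂]]
    (hkkt1 : fx1 = ((!![2*x1, x2/2; x2/2, 0]) * Λ).trace)
    (hkkt2 : fx2 = ((!![0, x1/2; x1/2, 2*x2]) * Λ).trace)
    (hkkt3 : (!![x1^2-2, x1*x2/2; x1*x2/2, x2^2-2]) * Λ = 0) :
    Λ = !![ (1/4)*x1*fx1,
            (x2/4 - (3/32)*x1^2*x2)*fx1 + (x1/4 - (3/32)*x1*x2^2)*fx2 ;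
            (x2/4 - (3/32)*x1^2*x2)*fx1 + (x1/4 - (3/32)*x1*x2^2)*fx2,
            (1/4)*x2*fx2 ] := by
  have hsym : Λ 1 0 = Λ 0 1 := by
    have := congrFun (congrFun hΛ 0) 1
    simpa [Matrix.transpose_apply] using this
  have e1 := congrFun (congrFun hkkt3 0) 0
  have e2 := congrFun (congrFun hkkt3 0) 1
  have e3 := congrFun (congrFun hkkt3 1) 0
  have e4 := congrFun (congrFun hkkt3 1) 1
  simp [Matrix.mul_apply, Fin.sum_univ_two] at e1 e2 e3 e4
  simp [Matrix.trace, Matrix.mul_apply, Fin.sum_univ_two, Matrix.diag] at hkkt1 hkkt2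
  rw [hsym] at e1 e3 hkkt1 hkkt2
  ext i j
  fin_cases i <;> fin_cases j <;>
    simp [Matrix.cons_val_zero, Matrix.cons_val_one, hsym]
  · rw [hkkt1]; linear_combination (-1/2) * e1
  · rw [hkkt1, hkkt2]
    linear_combination ((3/16)*x1*x2) * e1 - (1/4) * e2 - (1/4) * e3 + ((3/16)*x1*x2) * e4
  · rw [hkkt1, hkkt2]
    linear_combination ((3/16)*x1*x2) * e1 - (1/4) * e2 - (1/4) * e3 + ((3/16)*x1*x2) * e4
  · rw [hkkt2]; linear_combination (-1/2) * e4
end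

section
/- Let G(x) be an m×m linear matrix polynomial G(x)ᵢⱼ = aᵢⱼᵀx + bᵢⱼ where the vectors aᵢⱼ ∈ ℝⁿ (1 ≤ i ≤ j ≤ m) are linearly independent. Let P₁ = [a₁₁, 2a₁₂, a₂₂, 2a₁₃, …, a_{mm}] ∈ ℝ^{n×Δ(m)}. Then P₁ᵀP₁ is invertible, and the symmetric matrix polynomial Θ(x) defined by uvec(Θ(x)) = (P₁ᵀP₁)⁻¹P₁ᵀ∇f(x) satisfies: for every KKT pair (x, Λ) (i.e., ∇f(x) = ∇G(x)*[Λ] and G(x)Λ = 0), Λ = Θ(x). -/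
open Matrix Finset

lemma sum_symm_pairs (m : ℕ) (f : Fin m × Fin m → ℝ)
    (hf : ∀ i j : Fin m, f (i, j) = f (j, i)) :
    ∑ q : Fin m × Fin m, f q
      = ∑ p : {p : Fin m × Fin m // p.1 ≤ p.2},
          (if p.val.1 = p.val.2 then (1:ℝ) else 2) * f p.val := by
  have hsub : ∑ p : {p : Fin m × Fin m // p.1 ≤ p.2},
      (if p.val.1 = p.val.2 then (1:ℝ) else 2) * f p.val
      = ∑ q : Fin m × Fin m, (if q.1 ≤ q.2 then (if q.1 = q.2 then (1:ℝ) else 2) * f q else 0) := by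
    rw [← Finset.sum_filter]
    exact (Finset.sum_subtype (p := fun q : Fin m × Fin m => q.1 ≤ q.2)
      (Finset.univ.filter fun q : Fin m × Fin m => q.1 ≤ q.2) (fun q => by simp)
      (fun q => (if q.1 = q.2 then (1:ℝ) else 2) * f q)).symm
  rw [hsub]
  have hC : ∑ q : Fin m × Fin m, (if q.2 < q.1 then f q else 0)
      = ∑ q : Fin m × Fin m, (if q.1 < q.2 then f q else 0) := by
    rw [← Equiv.sum_comp (Equiv.prodComm (Fin m) (Fin m))
      (fun q : Fin m × Fin m => if q.2 < q.1 then f q else 0)]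
    refine Fintype.sum_congr _ _ fun q => ?_
    simp only [Equiv.prodComm_apply, Prod.swap]
    rcases q with ⟨i, j⟩
    by_cases h : i < j <;> simp [h, hf i j]
  have lhs : ∑ q : Fin m × Fin m, f q
      = (∑ q : Fin m × Fin m, (if q.1 < q.2 then f q else 0))
        + (∑ q : Fin m × Fin m, (if q.1 = q.2 then f q else 0))
        + (∑ q : Fin m × Fin m, (if q.2 < q.1 then f q else 0)) := by
    rw [← Finset.sum_add_distrib, ← Finset.sum_add_distrib]
    refine Fintype.sum_congr _ _ fun q => ?_
    rcases lt_trichotomy q.1 q.2 with h | h | h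
    · simp [h, ne_of_lt h, not_lt_of_gt h, lt_irrefl]
    · simp [h, lt_irrefl]
    · simp [h, (ne_of_lt h).symm, not_lt_of_gt h, lt_irrefl]
  rw [lhs, hC]
  have rhs : ∑ q : Fin m × Fin m, (if q.1 ≤ q.2 then (if q.1 = q.2 then (1:ℝ) else 2) * f q else 0)
      = (∑ q : Fin m × Fin m, (if q.1 < q.2 then f q else 0))
        + (∑ q : Fin m × Fin m, (if q.1 = q.2 then f q else 0))
        + (∑ q : Fin m × Fin m, (if q.1 < q.2 then f q else 0)) := by
    rw [← Finset.sum_add_distrib, ← Finset.sum_add_distrib]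
    refine Fintype.sum_congr _ _ fun q => ?_
    rcases lt_trichotomy q.1 q.2 with h | h | h
    · simp [h, le_of_lt h, ne_of_lt h]; ring
    · simp [h, le_of_eq h, lt_irrefl]
    · simp [h, not_le_of_gt h, not_lt_of_gt h, (ne_of_lt h).symm]
  rw [rhs]

/-- For a linear pencil `G(x)ᵢⱼ = aᵢⱼᵀx + bᵢⱼ` with linearly
independent `aᵢⱼ` (i ≤ j), the matrix `P₁ᵀP₁` is invertible and
`uvec(Λ) = (P₁ᵀP₁)⁻¹P₁ᵀ ∇f(x)` for every KKT pair `(x, Λ)`. -/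
theorem stmt8 (n m : ℕ)
    (a : {p : Fin m × Fin m // p.1 ≤ p.2} → (Fin n → ℝ))
    (b : {p : Fin m × Fin m // p.1 ≤ p.2} → ℝ)
    (ha : LinearIndependent ℝ a)
    (P1 : Matrix (Fin n) {p : Fin m × Fin m // p.1 ≤ p.2} ℝ)
    (hP1 : ∀ i p, P1 i p = (if p.val.1 = p.val.2 then 1 else 2) * a p i)
    (G : (Fin n → ℝ) → Matrix (Fin m) (Fin m) ℝ)
    (hGsym : ∀ x, (G x).IsSymm)
    (hG : ∀ x (p : {p : Fin m × Fin m // p.1 ≤ p.2}),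
      G x p.val.1 p.val.2 = a p ⬝ᵥ x + b p)
    (Gd : Fin n → Matrix (Fin m) (Fin m) ℝ)           -- ∂G/∂xₖ (constant in x)
    (hGdsym : ∀ k, (Gd k).IsSymm)
    (hGd : ∀ k (p : {p : Fin m × Fin m // p.1 ≤ p.2}), Gd k p.val.1 p.val.2 = a p k)
    (gradf : (Fin n → ℝ) → (Fin n → ℝ)) :
    IsUnit (P1ᵀ * P1) ∧
    ∀ (x : Fin n → ℝ) (Λ : Matrix (Fin m) (Fin m) ℝ), Λ.IsSymm →
      (gradf x = fun k => (Gd k * Λ).trace) → G x * Λ = 0 →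
      (fun p : {p : Fin m × Fin m // p.1 ≤ p.2} => Λ p.val.1 p.val.2)
        = ((P1ᵀ * P1)⁻¹ * P1ᵀ).mulVec (gradf x) := by
  -- columns of P1 are linearly independent
  have hcols : LinearIndependent ℝ (fun p => P1ᵀ p) := by
    have hw : ∀ p : {p : Fin m × Fin m // p.1 ≤ p.2},
        ((if p.val.1 = p.val.2 then (1:ℝ) else 2)) ≠ 0 := by
      intro p; split <;> norm_num
    have := ha.units_smul (fun p => Units.mk0 _ (hw p))
    convert this using 1
    funext p
    ext i
    simp [Matrix.transpose_apply, hP1, Units.smul_def, Units.mk0]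
  have hP1inj : Function.Injective P1.mulVec := Matrix.mulVec_injective_iff.2 hcols
  have hinj : Function.Injective (P1ᵀ * P1).mulVec := by
    intro u v huv
    have hd : (P1ᵀ * P1) *ᵥ (u - v) = 0 := by
      rw [Matrix.mulVec_sub, huv, sub_self]
    have h0 : P1 *ᵥ (u - v) = 0 := by
      have hdp : (P1 *ᵥ (u - v)) ⬝ᵥ (P1 *ᵥ (u - v)) = 0 := by
        rw [← Matrix.mulVec_mulVec] at hd
        calc (P1 *ᵥ (u - v)) ⬝ᵥ (P1 *ᵥ (u - v))
            = (u - v) ⬝ᵥ (P1ᵀ *ᵥ (P1 *ᵥ (u - v))) := by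
              rw [Matrix.dotProduct_mulVec, ← Matrix.mulVec_transpose,
                dotProduct_comm]
          _ = 0 := by rw [hd, dotProduct_zero]
      exact (dotProduct_self_eq_zero).1 hdp
    have := hP1inj (h0.trans (Matrix.mulVec_zero P1).symm)
    exact sub_eq_zero.1 this
  have hUnit : IsUnit (P1ᵀ * P1) := Matrix.mulVec_injective_iff_isUnit.1 hinj
  refine ⟨hUnit, fun x Λ hΛ hgrad _ => ?_⟩
  set u : {p : Fin m × Fin m // p.1 ≤ p.2} → ℝ := fun p => Λ p.val.1 p.val.2 with hu
  have hg : gradf x = P1 *ᵥ u := by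
    rw [hgrad]
    funext k
    show (Gd k * Λ).trace = _
    have htr : (Gd k * Λ).trace
        = ∑ q : Fin m × Fin m, Gd k q.1 q.2 * Λ q.1 q.2 := by
      rw [Matrix.trace]
      simp only [Matrix.diag_apply, Matrix.mul_apply]
      rw [Fintype.sum_prod_type]
      refine Fintype.sum_congr _ _ fun i => Fintype.sum_congr _ _ fun j => ?_
      congr 1
      exact (hΛ.apply i j).symm ▸ rfl
    rw [htr, sum_symm_pairs m (fun q => Gd k q.1 q.2 * Λ q.1 q.2)
      (fun i j => by simp only []; rw [hGdsym k |>.apply j i, hΛ.apply j i])]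
    simp only [Matrix.mulVec, dotProduct]
    refine Finset.sum_congr rfl fun p _ => ?_
    rw [hP1 k p, hGd k p]
    ring
  rw [hg, Matrix.mulVec_mulVec, Matrix.mul_assoc,
    Matrix.nonsing_inv_mul _ ((Matrix.isUnit_iff_isUnit_det _).1 hUnit),
    Matrix.one_mulVec]
end

section
/- Let G = [[G₁, G₂],[G₂ᵀ, G₃]] be a symmetric block matrix (with G₁ an ℓ×ℓ invertible block) depending smoothly on t, and suppose the Schur complement S = G₃ − G₂ᵀG₁⁻¹G₂ vanishes identically on an interval. Let Λ(t) = [[G₁⁻¹G₂Λ₃G₂ᵀG₁⁻ᵀ, −G₁⁻¹G₂Λ₃],[−(G₁⁻¹G₂Λ₃)ᵀ, Λ₃]] for a smooth symmetric Λ₃(t). Then tr(G(t) · dΛ/dt(t)) = tr(S(t) · dΛ₃/dt(t)) = 0 for all t in the interval. -/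
/-!
Write `Λ = M Λ₃ Mᵀ` with `M = [-G₁⁻¹G₂; I]`. At a point `t` of the interval the vanishing of the
Schur complement says exactly that `G(t) M(t) = 0`, and (`G₁` being symmetric) `M(t)ᵀ G(t) = 0`.
Freezing `G` at `G(t)`, `tr(G(t) Λ(s)) = tr(M(s)ᵀ G(t) M(s) Λ₃(s))`, and `M(s)ᵀ G(t) M(s)`
vanishes to second order at `s = t`, so the derivative of this trace at `t` is zero.
-/

open Matrix

namespace Matrix

section Calculus

variable {𝕜 : Type*} [NontriviallyNormedField 𝕜] {m n p : Type*}

def HasDerivAtEntrywise (A : 𝕜 → Matrix m n 𝕜) (A' : Matrix m n 𝕜) (t : 𝕜) : Prop :=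
  ∀ i j, HasDerivAt (fun s => A s i j) (A' i j) t

namespace HasDerivAtEntrywise

variable {A : 𝕜 → Matrix m n 𝕜} {A' : Matrix m n 𝕜} {t : 𝕜}

theorem const (C : Matrix m n 𝕜) (t : 𝕜) : HasDerivAtEntrywise (fun _ => C) 0 t :=
  fun _ _ => hasDerivAt_const _ _

theorem neg (hA : HasDerivAtEntrywise A A' t) : HasDerivAtEntrywise (fun s => -A s) (-A') t :=
  fun i j => (hA i j).neg

theorem transpose (hA : HasDerivAtEntrywise A A' t) :
    HasDerivAtEntrywise (fun s => (A s)ᵀ) A'ᵀ t :=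
  fun i j => hA j i

theorem mul [Fintype n] {C : 𝕜 → Matrix n p 𝕜} {C' : Matrix n p 𝕜}
    (hA : HasDerivAtEntrywise A A' t) (hC : HasDerivAtEntrywise C C' t) :
    HasDerivAtEntrywise (fun s => A s * C s) (A' * C t + A t * C') t := by
  intro i j
  simp only [mul_apply, add_apply, ← Finset.sum_add_distrib]
  exact HasDerivAt.fun_sum fun q _ => (hA i q).mul (hC q j)

theorem fromRows {m₂ : Type*} {C : 𝕜 → Matrix m₂ n 𝕜} {C' : Matrix m₂ n 𝕜}
    (hA : HasDerivAtEntrywise A A' t) (hC : HasDerivAtEntrywise C C' t) :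
    HasDerivAtEntrywise (fun s => fromRows (A s) (C s)) (Matrix.fromRows A' C') t := by
  rintro (i | i) j
  exacts [hA i j, hC i j]

theorem trace [Fintype m] {A : 𝕜 → Matrix m m 𝕜} {A' : Matrix m m 𝕜}
    (hA : HasDerivAtEntrywise A A' t) : HasDerivAt (fun s => (A s).trace) A'.trace t :=
  HasDerivAt.fun_sum fun i _ => hA i i

end HasDerivAtEntrywise

theorem differentiableAt_det [Fintype n] [DecidableEq n] {A : 𝕜 → Matrix n n 𝕜} {t : 𝕜}
    (hA : ∀ i j, DifferentiableAt 𝕜 (fun s => A s i j) t) :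
    DifferentiableAt 𝕜 (fun s => (A s).det) t := by
  simp only [det_apply, Units.smul_def, zsmul_eq_mul]
  exact DifferentiableAt.fun_sum fun σ _ =>
    (DifferentiableAt.fun_finsetProd fun i _ => hA (σ i) i).const_mul _

/-- Cramer's rule: the entries of `A⁻¹` are `det A⁻¹` times determinants of matrices whose
entries are entries of `A` or constants. -/
theorem differentiableAt_inv_apply [Fintype n] [DecidableEq n] {A : 𝕜 → Matrix n n 𝕜} {t : 𝕜}
    (hA : ∀ i j, DifferentiableAt 𝕜 (fun s => A s i j) t) (hdet : IsUnit (A t).det) (i j : n) :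
    DifferentiableAt 𝕜 (fun s => (A s)⁻¹ i j) t := by
  simp only [inv_def, Ring.inverse_eq_inv, smul_apply, smul_eq_mul, adjugate_apply]
  refine ((differentiableAt_det hA).inv hdet.ne_zero).mul (differentiableAt_det fun p q => ?_)
  by_cases hp : p = j
  · simp only [hp, updateRow_self]
    exact differentiableAt_const _
  · simpa only [updateRow_ne hp] using hA p q

theorem HasDerivAtEntrywise.exists_inv [Fintype n] [DecidableEq n] {A : 𝕜 → Matrix n n 𝕜}
    {A' : Matrix n n 𝕜} {t : 𝕜} (hA : HasDerivAtEntrywise A A' t) (hdet : IsUnit (A t).det) :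
    ∃ B', HasDerivAtEntrywise (fun s => (A s)⁻¹) B' t :=
  ⟨_, fun i j =>
    (differentiableAt_inv_apply (fun p q => (hA p q).differentiableAt) hdet i j).hasDerivAt⟩

theorem hasDerivAt_trace_mul_conj_of_mul_eq_zero {ι κ : Type*} [Fintype ι] [Fintype κ]
    {G : Matrix ι ι 𝕜} {M : 𝕜 → Matrix ι κ 𝕜} {M' : Matrix ι κ 𝕜}
    {C : 𝕜 → Matrix κ κ 𝕜} {C' : Matrix κ κ 𝕜} {t : 𝕜}
    (hM : HasDerivAtEntrywise M M' t) (hC : HasDerivAtEntrywise C C' t)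
    (hGM : G * M t = 0) (hMG : (M t)ᵀ * G = 0) :
    HasDerivAt (fun s => (G * (M s * C s * (M s)ᵀ)).trace) 0 t := by
  have hN : HasDerivAtEntrywise (fun s => (M s)ᵀ * G * M s) 0 t := by
    convert (hM.transpose.mul (.const G t)).mul hM using 1
    rw [Matrix.mul_zero, add_zero, Matrix.mul_assoc, hGM, hMG, Matrix.mul_zero, Matrix.zero_mul,
      add_zero]
  have hNt : (M t)ᵀ * G * M t = 0 := by rw [hMG, Matrix.zero_mul]
  have hcyc (s : 𝕜) : (G * (M s * C s * (M s)ᵀ)).trace = ((M s)ᵀ * G * M s * C s).trace := by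
    rw [← Matrix.mul_assoc, trace_mul_comm]
    simp only [Matrix.mul_assoc]
  simpa only [hcyc, hNt, Matrix.zero_mul, Matrix.mul_zero, add_zero, trace_zero] using
    (hN.mul hC).trace

end Calculus

section Schur

variable {R : Type*} [CommRing R] {l k : Type*} [Fintype k] [DecidableEq k]

theorem fromRows_neg_one_mul_mul_transpose (X : Matrix l k R) {C : Matrix k k R}
    (hC : C.IsSymm) :
    fromRows (-X) (1 : Matrix k k R) * C * (fromRows (-X) 1)ᵀ =
      fromBlocks (X * C * Xᵀ) (-(X * C)) (-(X * C)ᵀ) C := by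
  rw [fromRows_mul, transpose_fromRows, fromRows_mul_fromCols, transpose_mul, hC.eq]
  simp only [Matrix.neg_mul, Matrix.mul_neg, neg_neg, Matrix.one_mul, Matrix.mul_one,
    transpose_one, transpose_neg]

variable [Fintype l] [DecidableEq l]

theorem fromBlocks_mul_fromRows_neg_inv_mul_one (A : Matrix l l R) (B : Matrix l k R)
    (C : Matrix k l R) (D : Matrix k k R) (hA : IsUnit A.det) :
    fromBlocks A B C D * fromRows (-(A⁻¹ * B)) (1 : Matrix k k R) =
      fromRows 0 (D - C * A⁻¹ * B) := by
  rw [fromBlocks_mul_fromRows, Matrix.mul_neg, ← Matrix.mul_assoc, mul_nonsing_inv A hA]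
  simp only [Matrix.one_mul, Matrix.mul_one, Matrix.mul_neg, Matrix.mul_assoc, neg_add_cancel,
    neg_add_eq_sub]

theorem transpose_fromRows_neg_inv_mul_one_mul_fromBlocks {A : Matrix l l R} (B : Matrix l k R)
    (D : Matrix k k R) (hA : A.IsSymm) (hdet : IsUnit A.det) :
    (fromRows (-(A⁻¹ * B)) (1 : Matrix k k R))ᵀ * fromBlocks A B Bᵀ D =
      fromCols 0 (D - Bᵀ * A⁻¹ * B) := by
  rw [transpose_fromRows, fromCols_mul_fromBlocks, transpose_neg, transpose_mul,
    transpose_nonsing_inv, hA.eq, Matrix.neg_mul, Matrix.mul_assoc, nonsing_inv_mul A hdet,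
    Matrix.mul_one, transpose_one, Matrix.one_mul, neg_add_cancel, Matrix.neg_mul, Matrix.one_mul,
    neg_add_eq_sub]

end Schur

end Matrix

theorem stmt10_general (l k : ℕ) (a b : ℝ)
    (G1 G1d : ℝ → Matrix (Fin l) (Fin l) ℝ)
    (G2 G2d : ℝ → Matrix (Fin l) (Fin k) ℝ)
    (G3 : ℝ → Matrix (Fin k) (Fin k) ℝ)
    (Λ3 Λ3d : ℝ → Matrix (Fin k) (Fin k) ℝ)
    (Λd : ℝ → Matrix (Fin l ⊕ Fin k) (Fin l ⊕ Fin k) ℝ)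
    (hG1sym : ∀ t, (G1 t).IsSymm)
    (hΛ3sym : ∀ t, (Λ3 t).IsSymm)
    (hG1inv : ∀ t ∈ Set.Ioo a b, IsUnit (G1 t))
    -- the Schur complement vanishes identically on the interval:
    (hSchur : ∀ t ∈ Set.Ioo a b, G3 t - (G2 t)ᵀ * (G1 t)⁻¹ * G2 t = 0)
    -- smooth dependence on t (entrywise derivatives):
    (hG1d : ∀ t ∈ Set.Ioo a b, ∀ i j, HasDerivAt (fun s => G1 s i j) (G1d t i j) t)
    (hG2d : ∀ t ∈ Set.Ioo a b, ∀ i j, HasDerivAt (fun s => G2 s i j) (G2d t i j) t)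
    (hΛ3d : ∀ t ∈ Set.Ioo a b, ∀ i j, HasDerivAt (fun s => Λ3 s i j) (Λ3d t i j) t)
    -- Λd is the derivative of the block matrix Λ(t):
    (hΛd : ∀ t ∈ Set.Ioo a b, ∀ i j,
      HasDerivAt (fun s =>
        (Matrix.fromBlocks
          ((G1 s)⁻¹ * G2 s * Λ3 s * (G2 s)ᵀ * ((G1 s)⁻¹)ᵀ)
          (-((G1 s)⁻¹ * G2 s * Λ3 s))
          (-((G1 s)⁻¹ * G2 s * Λ3 s)ᵀ)
          (Λ3 s)) i j)
        (Λd t i j) t) :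
    ∀ t ∈ Set.Ioo a b,
      (Matrix.fromBlocks (G1 t) (G2 t) (G2 t)ᵀ (G3 t) * Λd t).trace
        = ((G3 t - (G2 t)ᵀ * (G1 t)⁻¹ * G2 t) * Λ3d t).trace
      ∧ (Matrix.fromBlocks (G1 t) (G2 t) (G2 t)ᵀ (G3 t) * Λd t).trace = 0 := by
  intro t ht
  have hdet : IsUnit (G1 t).det := (isUnit_iff_isUnit_det _).mp (hG1inv t ht)
  set M := fun s => fromRows (-((G1 s)⁻¹ * G2 s)) (1 : Matrix (Fin k) (Fin k) ℝ)
  obtain ⟨G1invd, hG1invd⟩ := HasDerivAtEntrywise.exists_inv (hG1d t ht) hdet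
  have hM : HasDerivAtEntrywise M _ t :=
    ((hG1invd.mul (hG2d t ht)).neg).fromRows (.const 1 t)
  have hΛ : HasDerivAtEntrywise (fun s => M s * Λ3 s * (M s)ᵀ) (Λd t) t := by
    simpa only [HasDerivAtEntrywise, M, fromRows_neg_one_mul_mul_transpose _ (hΛ3sym _),
      transpose_mul, Matrix.mul_assoc] using hΛd t ht
  have hGM := fromBlocks_mul_fromRows_neg_inv_mul_one (G1 t) (G2 t) (G2 t)ᵀ (G3 t) hdet
  have hMG := transpose_fromRows_neg_inv_mul_one_mul_fromBlocks (G2 t) (G3 t) (hG1sym t) hdet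
  rw [hSchur t ht, fromRows_zero] at hGM
  rw [hSchur t ht, fromCols_zero] at hMG
  -- two computations of the derivative of `s ↦ tr(G(t) Λ(s))` at `t`
  have htrace := (((HasDerivAtEntrywise.const _ t).mul hΛ).trace).unique
    (hasDerivAt_trace_mul_conj_of_mul_eq_zero hM (hΛ3d t ht) hGM hMG)
  rw [Matrix.zero_mul, zero_add] at htrace
  exact ⟨by rw [htrace, hSchur t ht, Matrix.zero_mul, trace_zero], htrace⟩

/-- For the block matrices `G(t)` and `Λ(t)` with vanishing Schur
complement `S = G₃ − G₂ᵀG₁⁻¹G₂ ≡ 0`, one has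
`tr(G(t)·Λ′(t)) = tr(S(t)·Λ₃′(t)) = 0`. -/
theorem stmt10 (l k : ℕ) (a b : ℝ)
    (G1 G1d : ℝ → Matrix (Fin l) (Fin l) ℝ)
    (G2 G2d : ℝ → Matrix (Fin l) (Fin k) ℝ)
    (G3 G3d : ℝ → Matrix (Fin k) (Fin k) ℝ)
    (Λ3 Λ3d : ℝ → Matrix (Fin k) (Fin k) ℝ)
    (Λd : ℝ → Matrix (Fin l ⊕ Fin k) (Fin l ⊕ Fin k) ℝ)
    (hG1sym : ∀ t, (G1 t).IsSymm) (hG3sym : ∀ t, (G3 t).IsSymm)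
    (hΛ3sym : ∀ t, (Λ3 t).IsSymm)
    (hG1inv : ∀ t ∈ Set.Ioo a b, IsUnit (G1 t))
    -- the Schur complement vanishes identically on the interval:
    (hSchur : ∀ t ∈ Set.Ioo a b, G3 t - (G2 t)ᵀ * (G1 t)⁻¹ * G2 t = 0)
    -- smooth dependence on t (entrywise derivatives):
    (hG1d : ∀ t ∈ Set.Ioo a b, ∀ i j, HasDerivAt (fun s => G1 s i j) (G1d t i j) t)
    (hG2d : ∀ t ∈ Set.Ioo a b, ∀ i j, HasDerivAt (fun s => G2 s i j) (G2d t i j) t)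
    (hG3d : ∀ t ∈ Set.Ioo a b, ∀ i j, HasDerivAt (fun s => G3 s i j) (G3d t i j) t)
    (hΛ3d : ∀ t ∈ Set.Ioo a b, ∀ i j, HasDerivAt (fun s => Λ3 s i j) (Λ3d t i j) t)
    -- Λd is the derivative of the block matrix Λ(t):
    (hΛd : ∀ t ∈ Set.Ioo a b, ∀ i j,
      HasDerivAt (fun s =>
        (Matrix.fromBlocks
          ((G1 s)⁻¹ * G2 s * Λ3 s * (G2 s)ᵀ * ((G1 s)⁻¹)ᵀ)
          (-((G1 s)⁻¹ * G2 s * Λ3 s))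
          (-((G1 s)⁻¹ * G2 s * Λ3 s)ᵀ)
          (Λ3 s)) i j)
        (Λd t i j) t) :
    ∀ t ∈ Set.Ioo a b,
      (Matrix.fromBlocks (G1 t) (G2 t) (G2 t)ᵀ (G3 t) * Λd t).trace
        = ((G3 t - (G2 t)ᵀ * (G1 t)⁻¹ * G2 t) * Λ3d t).trace
      ∧ (Matrix.fromBlocks (G1 t) (G2 t) (G2 t)ᵀ (G3 t) * Λd t).trace = 0 :=
  stmt10_general l k a b G1 G1d G2 G2d G3 Λ3 Λ3d Λd hG1sym hΛ3sym hG1inv hSchur hG1d hG2d hΛ3d hΛd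
end

section
/- Let f ∈ ℝ[x], let J be an ideal of ℝ[x], and suppose f^η ∈ J for some integer η > 0. For ε > 0 define s_ε(x) = √ε · ∑_{j=0}^{η−1} C(1/2, j) (f(x)/ε)^j and σ_ε = s_ε², where C(1/2, j) are the binomial coefficients of (1+t)^{1/2}. Then f + ε − σ_ε ∈ J, σ_ε is a sum of squares, and deg(σ_ε) ≤ 2(η−1)·deg(f) is independent of ε. -/
/-!
The coefficients `C(1/2, j)` are those of the binomial series `B = (1 + X)^(1/2)`, and `B² = 1 + X`
by Chu–Vandermonde. Hence the truncation `T` of `B` below degree `η` satisfies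
`T² ≡ 1 + X (mod X^η)`. Substituting `X ↦ f/ε` and multiplying by `ε` gives
`f + ε - ε T(f/ε)² ∈ (f^η)`, and `σ_ε = (√ε T(f/ε))²` is a square of total degree at most
`2 (η - 1) deg f`.
-/

open Polynomial Finset
open scoped PowerSeries

lemma Ring.choose_eq_prod_range_div {K : Type*} [Field K] [CharZero K] (a : K) (n : ℕ) :
    Ring.choose a n = (∏ i ∈ range n, (a - i)) / n.factorial := by
  rw [Ring.choose_eq_smul, ← aeval_eq_smeval, aeval_def, ← eval_map, descPochhammer_map,
    descPochhammer_eval_eq_prod_range, smul_eq_mul, inv_mul_eq_div]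

lemma Polynomial.X_pow_dvd_sub_of_trunc_eq {R : Type*} [Ring R] {n : ℕ} {p q : R[X]}
    (h : PowerSeries.trunc n (p : R⟦X⟧) = PowerSeries.trunc n (q : R⟦X⟧)) : X ^ n ∣ p - q := by
  refine (X_pow_dvd_iff).2 fun d hd => ?_
  have hcoeff := congrArg (Polynomial.coeff · d) h
  simp only [PowerSeries.coeff_trunc, if_pos hd, Polynomial.coeff_coe] at hcoeff
  rw [coeff_sub, hcoeff, sub_self]

lemma PowerSeries.X_pow_dvd_trunc_mul_trunc_binomialSeries_sub {R K : Type*} [CommRing R]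
    [BinomialRing R] [CommRing K] [Algebra R K] (n : ℕ) (r s : R) :
    (Polynomial.X : K[X]) ^ n ∣ trunc n (binomialSeries K r) * trunc n (binomialSeries K s) -
      trunc n (binomialSeries K (r + s)) := by
  apply Polynomial.X_pow_dvd_sub_of_trunc_eq
  rw [Polynomial.coe_mul, trunc_trunc_mul_trunc, trunc_trunc, binomialSeries_add]

lemma PowerSeries.X_pow_dvd_trunc_binomialSeries_half_sq_sub (K : Type*) [Field K] [CharZero K]
    (n : ℕ) :
    (Polynomial.X : K[X]) ^ n ∣
      trunc n (binomialSeries K (1 / 2 : K)) ^ 2 - (1 + Polynomial.X) := by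
  have h1 : (Polynomial.X : K[X]) ^ n ∣
      trunc n (binomialSeries K (1 : K)) - (1 + Polynomial.X) := by
    apply Polynomial.X_pow_dvd_sub_of_trunc_eq
    rw [trunc_trunc, ← Nat.cast_one, binomialSeries_nat, pow_one]
    simp
  have h2 := X_pow_dvd_trunc_mul_trunc_binomialSeries_sub (K := K) n (1 / 2 : K) (1 / 2)
  rw [add_halves] at h2
  simpa [sq] using dvd_add h2 h1

lemma PowerSeries.natDegree_trunc_le_pred {R : Type*} [CommSemiring R] (f : R⟦X⟧) (n : ℕ) :
    (trunc n f).natDegree ≤ n - 1 := by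
  cases n with
  | zero => simp
  | succ n => exact Nat.lt_succ_iff.mp (natDegree_trunc_lt f n)

lemma MvPolynomial.totalDegree_aeval_le {R σ : Type*} [CommSemiring R] (p : R[X])
    (g : MvPolynomial σ R) : (Polynomial.aeval g p).totalDegree ≤ p.natDegree * g.totalDegree := by
  rw [aeval_eq_sum_range]
  refine (totalDegree_finsetSum _ _).trans (Finset.sup_le fun i hi => ?_)
  calc (p.coeff i • g ^ i).totalDegree ≤ (g ^ i).totalDegree := totalDegree_smul_le _ _
    _ ≤ i * g.totalDegree := totalDegree_pow _ _
    _ ≤ p.natDegree * g.totalDegree := by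
      gcongr; exact Nat.lt_succ_iff.mp (Finset.mem_range.mp hi)

lemma Ideal.add_algebraMap_sub_mul_aeval_sq_mem {K A : Type*} [Field K] [CommRing A]
    [Algebra K A] {J : Ideal A} {f : A} {n : ℕ} (hf : f ^ n ∈ J) {p : K[X]}
    (hp : X ^ n ∣ p ^ 2 - (1 + X)) {ε : K} (hε : ε ≠ 0) :
    f + algebraMap K A ε - algebraMap K A ε * aeval (algebraMap K A ε⁻¹ * f) p ^ 2 ∈ J := by
  obtain ⟨q, hq⟩ := hp
  set g := algebraMap K A ε⁻¹ * f
  have hpg : aeval g p ^ 2 - (1 + g) = g ^ n * aeval g q := by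
    simpa using congrArg (aeval g) hq
  have hεε : algebraMap K A ε * algebraMap K A ε⁻¹ = 1 := by
    rw [← map_mul, mul_inv_cancel₀ hε, map_one]
  have key : f + algebraMap K A ε - algebraMap K A ε * aeval g p ^ 2 =
      -(algebraMap K A ε * algebraMap K A ε⁻¹ ^ n * aeval g q) * f ^ n := by
    linear_combination (-algebraMap K A ε) * hpg - f * hεε
  rw [key]
  exact J.mul_mem_left _ hf

theorem stmt12_general (n : ℕ) (f : MvPolynomial (Fin n) ℝ)
    (J : Ideal (MvPolynomial (Fin n) ℝ))
    (η : ℕ) (hf : f ^ η ∈ J) (ε : ℝ) (hε : 0 < ε)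
    -- the generalized binomial coefficients C(1/2, j):
    (c : ℕ → ℝ)
    (hc : ∀ j, c j = (∏ i ∈ Finset.range j, ((1:ℝ)/2 - i)) / (Nat.factorial j))
    (s : MvPolynomial (Fin n) ℝ)
    (hs : s = MvPolynomial.C (Real.sqrt ε) *
          ∑ j ∈ Finset.range η, MvPolynomial.C (c j) * (MvPolynomial.C ε⁻¹ * f) ^ j) :
    (f + MvPolynomial.C ε - s ^ 2 ∈ J) ∧ IsSumSq (s ^ 2) ∧
      (s ^ 2).totalDegree ≤ 2 * (η - 1) * f.totalDegree := by
  set T := PowerSeries.trunc η (PowerSeries.binomialSeries ℝ (1 / 2 : ℝ))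
  have hsT : s = MvPolynomial.C (Real.sqrt ε) * aeval (MvPolynomial.C ε⁻¹ * f) T := by
    rw [hs, aeval_def, PowerSeries.eval₂_trunc_eq_sum_range]
    simp [hc, Ring.choose_eq_prod_range_div, MvPolynomial.algebraMap_eq]
  have hs2 : s ^ 2 = MvPolynomial.C ε * aeval (MvPolynomial.C ε⁻¹ * f) T ^ 2 := by
    rw [hsT, mul_pow, ← map_pow, Real.sq_sqrt hε.le]
  refine ⟨?_, (IsSquare.sq s).isSumSq, ?_⟩
  · rw [hs2]
    exact Ideal.add_algebraMap_sub_mul_aeval_sq_mem hf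
      (PowerSeries.X_pow_dvd_trunc_binomialSeries_half_sq_sub ℝ η) hε.ne'
  · have hsdeg : s.totalDegree ≤ (η - 1) * f.totalDegree := by
      rw [hsT, MvPolynomial.C_mul']
      refine (MvPolynomial.totalDegree_smul_le _ _).trans <|
        (MvPolynomial.totalDegree_aeval_le _ _).trans ?_
      rw [MvPolynomial.C_mul']
      exact Nat.mul_le_mul (PowerSeries.natDegree_trunc_le_pred _ _)
        (MvPolynomial.totalDegree_smul_le _ _)
    calc (s ^ 2).totalDegree ≤ 2 * s.totalDegree := MvPolynomial.totalDegree_pow _ _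
      _ ≤ 2 * (η - 1) * f.totalDegree := by rw [mul_assoc]; gcongr

/-- If `f^η ∈ J`, then for every `ε > 0` the truncated square-root
polynomial `s_ε = √ε ∑_{j<η} C(1/2,j)(f/ε)^j` satisfies `f + ε − s_ε² ∈ J`,
`s_ε²` is SOS, and `deg(s_ε²) ≤ 2(η−1)deg f`. -/
theorem stmt12 (n : ℕ) (f : MvPolynomial (Fin n) ℝ)
    (J : Ideal (MvPolynomial (Fin n) ℝ))
    (η : ℕ) (hη : 0 < η) (hf : f ^ η ∈ J) (ε : ℝ) (hε : 0 < ε)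
    -- the generalized binomial coefficients C(1/2, j):
    (c : ℕ → ℝ)
    (hc : ∀ j, c j = (∏ i ∈ Finset.range j, ((1:ℝ)/2 - i)) / (Nat.factorial j))
    (s : MvPolynomial (Fin n) ℝ)
    (hs : s = MvPolynomial.C (Real.sqrt ε) *
          ∑ j ∈ Finset.range η, MvPolynomial.C (c j) * (MvPolynomial.C ε⁻¹ * f) ^ j) :
    (f + MvPolynomial.C ε - s ^ 2 ∈ J) ∧ IsSumSq (s ^ 2) ∧
      (s ^ 2).totalDegree ≤ 2 * (η - 1) * f.totalDegree :=
  stmt12_general n f J η hf ε hε c hc s hs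
end

section
/- Let J, J₀, …, J_r be ideals of ℝ[x] with J = J₀ ∩ ⋯ ∩ J_r, and suppose there exist polynomials a₀, …, a_r such that a₀² + ⋯ + a_r² − 1 ∈ J and for each i, aᵢ ∈ ∩_{j≠i} J_j. Fix an index r₀ and suppose polynomials σᵢ (i ≠ r₀) satisfy f − σᵢ ∈ Jᵢ, and σ_{r₀,ε} satisfies f + ε − σ_{r₀,ε} ∈ J_{r₀} for ε > 0. Define σ_ε = σ_{r₀,ε} a_{r₀}² + ∑_{i≠r₀}(σᵢ + ε) aᵢ². Then f + ε − σ_ε ∈ J. -/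
/-- Aggregation of SOS-type representations on the subvarieties:
`f + ε − σ_ε ∈ J` where `σ_ε = σ_{r₀,ε} a_{r₀}² + ∑_{i≠r₀}(σᵢ + ε)aᵢ²`. -/
theorem stmt14 (n r : ℕ) (f : MvPolynomial (Fin n) ℝ)
    (J : Ideal (MvPolynomial (Fin n) ℝ))
    (Ji : Fin (r + 1) → Ideal (MvPolynomial (Fin n) ℝ))
    (hJ : J = ⨅ i, Ji i)
    (a : Fin (r + 1) → MvPolynomial (Fin n) ℝ)
    (ha1 : (∑ i, a i ^ 2) - 1 ∈ J)
    (ha2 : ∀ i j, i ≠ j → a i ∈ Ji j)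
    (r₀ : Fin (r + 1))
    (σ : Fin (r + 1) → MvPolynomial (Fin n) ℝ)
    (hσ : ∀ i, i ≠ r₀ → f - σ i ∈ Ji i)
    (ε : ℝ) (hε : 0 < ε)
    (σr : MvPolynomial (Fin n) ℝ)
    (hσr : f + MvPolynomial.C ε - σr ∈ Ji r₀) :
    f + MvPolynomial.C ε -
        (σr * a r₀ ^ 2 +
          ∑ i ∈ Finset.univ.erase r₀, (σ i + MvPolynomial.C ε) * a i ^ 2) ∈ J := by
  subst hJ
  rw [Ideal.mem_iInf] at ha1 ⊢
  intro j
  have hs : (∑ i, a i ^ 2) = a r₀ ^ 2 + ∑ i ∈ Finset.univ.erase r₀, a i ^ 2 :=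
    (Finset.add_sum_erase _ _ (Finset.mem_univ r₀)).symm
  have key : f + MvPolynomial.C ε -
        (σr * a r₀ ^ 2 +
          ∑ i ∈ Finset.univ.erase r₀, (σ i + MvPolynomial.C ε) * a i ^ 2)
      = -((f + MvPolynomial.C ε) * ((∑ i, a i ^ 2) - 1))
        + (f + MvPolynomial.C ε - σr) * a r₀ ^ 2
        + ∑ i ∈ Finset.univ.erase r₀, (f - σ i) * a i ^ 2 := by
    have h1 : ∀ i, (f - σ i) * a i ^ 2
        = (f + MvPolynomial.C ε) * a i ^ 2 - (σ i + MvPolynomial.C ε) * a i ^ 2 := by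
      intro i; ring
    rw [hs]
    simp only [h1, Finset.sum_sub_distrib, ← Finset.mul_sum]
    ring
  rw [key]
  apply add_mem
  apply add_mem
  · exact neg_mem (Ideal.mul_mem_left _ _ (ha1 j))
  · rcases eq_or_ne j r₀ with h | h
    · subst h; exact Ideal.mul_mem_right _ _ hσr
    · exact Ideal.mul_mem_left _ _ (Ideal.pow_mem_of_mem _ (ha2 r₀ j (Ne.symm h)) 2 (by norm_num))
  · apply Ideal.sum_mem
    intro i hi
    rcases eq_or_ne j i with h | h
    · subst h
      exact Ideal.mul_mem_right _ _ (hσ j (Finset.ne_of_mem_erase hi))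
    · exact Ideal.mul_mem_left _ _ (Ideal.pow_mem_of_mem _ (ha2 i j (Ne.symm h)) 2 (by norm_num))
end

section
/- Let J be an ideal of ℝ[x], f̂ ∈ ℝ[x], ℓ ≥ 1 an integer, and σ* ∈ ℝ[x], with f̂^{2ℓ} + σ* ∈ J. For ε > 0 define φ_ε = −(1/(2ℓ)) ε^{1−2ℓ}(f̂^{2ℓ} + σ*) and θ_ε = ε(1 + f̂/ε + (1/(2ℓ))(f̂/ε)^{2ℓ}) + (1/(2ℓ))ε^{1−2ℓ}σ*. Then f̂ + ε = φ_ε + θ_ε, φ_ε ∈ J, and if σ* is a sum of squares then θ_ε is a nonnegative combination of an SOS polynomial and σ*, using that 1 + t + (1/(2ℓ))t^{2ℓ} is a sum of squares in ℝ[t]. -/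
/-!
Writing `t = f̂ / ε`, the polynomial `θ_ε - ε^{1-2ℓ} σ* / (2ℓ)` is `ε (1 + t + t^{2ℓ} / (2ℓ))`, and
`1 + t + t^{2ℓ} / (2ℓ) = (1 + t)² / 2 + (t^{2ℓ} - ℓ t² + ℓ) / (2ℓ)`, where
`t^{2ℓ} - ℓ t² + ℓ = 1 + ∑_{k < ℓ} ∑_{j < k} ((t² - 1) t^j)²` is a sum of squares by induction on `ℓ`.
-/

open Finset

theorem isSumSq_algebraMap_mul {A : Type*} [CommSemiring A] [Algebra ℝ A] {c : ℝ} (hc : 0 ≤ c)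
    {x : A} (hx : IsSumSq x) : IsSumSq (algebraMap ℝ A c * x) := by
  have hsq : IsSquare (algebraMap ℝ A c) :=
    ⟨algebraMap ℝ A √c, by rw [← map_mul, Real.mul_self_sqrt hc]⟩
  exact hsq.isSumSq.mul hx

theorem isSumSq_pow_two_mul_sub_mul_sq_add {R : Type*} [CommRing R] (t : R) (l : ℕ) :
    IsSumSq (t ^ (2 * l) - l * t ^ 2 + l) := by
  induction l with
  | zero => simp
  | succ l ih =>
    have hincr : ∑ j ∈ range l, ((t ^ 2 - 1) * t ^ j) ^ 2
        = (t ^ 2 - 1) * ((∑ j ∈ range l, (t ^ 2) ^ j) * (t ^ 2 - 1)) := by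
      rw [sum_mul, mul_sum]
      exact sum_congr rfl fun j _ => by ring
    have hstep : t ^ (2 * (l + 1)) - ((l + 1 : ℕ) : R) * t ^ 2 + ((l + 1 : ℕ) : R)
        = (t ^ (2 * l) - l * t ^ 2 + l) + ∑ j ∈ range l, ((t ^ 2 - 1) * t ^ j) ^ 2 := by
      rw [hincr, geom_sum_mul, ← pow_mul]
      push_cast
      ring
    rw [hstep]
    exact ih.add (IsSumSq.sum_sq _ _)

theorem isSumSq_one_add_add_mul_pow {A : Type*} [CommRing A] [Algebra ℝ A] (t : A) {l : ℕ}
    (hl : 1 ≤ l) : IsSumSq (1 + t + algebraMap ℝ A (1 / (2 * l)) * t ^ (2 * l)) := by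
  have hl' : (l : ℝ) ≠ 0 := by positivity
  have hhalf : algebraMap ℝ A (1 / 2) * 2 = 1 := by
    rw [← map_ofNat (algebraMap ℝ A) 2, ← map_mul]; norm_num
  have hcoef : algebraMap ℝ A (1 / (2 * l)) * l = algebraMap ℝ A (1 / 2) := by
    rw [← map_natCast (algebraMap ℝ A), ← map_mul]; congr 1; field_simp
  have hdecomp : 1 + t + algebraMap ℝ A (1 / (2 * l)) * t ^ (2 * l)
      = algebraMap ℝ A (1 / 2) * ((1 + t) * (1 + t))
        + algebraMap ℝ A (1 / (2 * l)) * (t ^ (2 * l) - l * t ^ 2 + l) := by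
    linear_combination (-(1 + t)) * hhalf + (t ^ 2 - 1) * hcoef
  rw [hdecomp]
  exact (isSumSq_algebraMap_mul (by norm_num) (IsSumSq.mul_self _)).add
    (isSumSq_algebraMap_mul (by positivity) (isSumSq_pow_two_mul_sub_mul_sq_add t l))

/-- With `f̂^{2ℓ} + σ* ∈ J`, the decomposition
`f̂ + ε = φ_ε + θ_ε` holds, with `φ_ε ∈ J` and `θ_ε` a nonnegative combination
of an SOS polynomial and `σ*`. -/
theorem stmt16 (n : ℕ) (J : Ideal (MvPolynomial (Fin n) ℝ))
    (fh σs : MvPolynomial (Fin n) ℝ)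
    (l : ℕ) (hl : 1 ≤ l)
    (hJ : fh ^ (2 * l) + σs ∈ J)
    (ε : ℝ) (hε : 0 < ε)
    (φ θ sos : MvPolynomial (Fin n) ℝ)
    (hφ : φ = - MvPolynomial.C ((1 / (2 * l : ℝ)) * ε ^ (1 - 2 * (l : ℤ)))
                * (fh ^ (2 * l) + σs))
    (hsos : sos = MvPolynomial.C ε *
        (1 + MvPolynomial.C ε⁻¹ * fh
           + MvPolynomial.C (1 / (2 * l : ℝ)) * (MvPolynomial.C ε⁻¹ * fh) ^ (2 * l)))
    (hθ : θ = sos + MvPolynomial.C ((1 / (2 * l : ℝ)) * ε ^ (1 - 2 * (l : ℤ))) * σs) :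
    fh + MvPolynomial.C ε = φ + θ ∧ φ ∈ J ∧
      (IsSumSq σs → IsSumSq sos ∧ 0 ≤ (1 / (2 * l : ℝ)) * ε ^ (1 - 2 * (l : ℤ))) := by
  have hε₀ : ε ≠ 0 := hε.ne'
  have hscale : ε ^ (1 - 2 * (l : ℤ)) = ε * ε⁻¹ ^ (2 * l) := by
    rw [zpow_sub₀ hε₀, zpow_one, div_eq_mul_inv, inv_pow]
    norm_cast
  have hinv : (MvPolynomial.C ε : MvPolynomial (Fin n) ℝ) * MvPolynomial.C ε⁻¹ = 1 := by
    rw [← map_mul, mul_inv_cancel₀ hε₀, map_one]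
  refine ⟨?_, hφ ▸ J.mul_mem_left _ hJ, fun _ => ⟨?_, by positivity⟩⟩
  · rw [hφ, hθ, hsos, hscale]
    simp only [map_mul, map_pow]
    linear_combination (-fh) * hinv
  · rw [hsos, ← MvPolynomial.algebraMap_eq]
    exact isSumSq_algebraMap_mul hε.le (isSumSq_one_add_add_mul_pow _ hl)
end
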